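/- The converse of the Versmissen translation fails: the sequent [ []⁻¹p ], [ []⁻¹q ] → ⟨⟩[]⁻¹(p·q) is not derivable in Lb*, while its translation r, r\p/s, s, r, r\q/s, s → r·(r\(p·q)/s)·s is derivable in L*. -/

import Mathlib

/-- Formulas of the Lambek calculus with brackets `Lb*`. -/
inductive Fm where
  | var : ℕ → Fm
  | mul : Fm → Fm → Fm        -- A · B
  | ldiv : Fm → Fm → Fm       -- A \ B
  | rdiv : Fm → Fm → Fm       -- B / A   (rdiv B A)
  | dia : Fm → Fm             -- ⟨⟩A
  | box : Fm → Fm             -- []⁻¹A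

/-- Items of a configuration: formulas or bracketed configurations. -/
inductive Item where
  | fml : Fm → Item
  | brk : List Item → Item

/-- Configurations (bracketed antecedents): sequences of items. -/
abbrev Cfg := List Item

/-- Configuration contexts: a configuration with a hole, possibly nested
inside brackets. -/
inductive Ctx where
  | top : Cfg → Cfg → Ctx
  | nest : Cfg → Ctx → Cfg → Ctx

/-- Plugging a configuration into the hole of a context. -/
def plug : Ctx → Cfg → Cfg
  | .top pre post, Γ => pre ++ Γ ++ post
  | .nest pre c post, Γ => pre ++ [Item.brk (plug c Γ)] ++ post

/-- Derivability in `Lb*` (the Lambek calculus with brackets, allowing empty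
antecedents). -/
inductive DerLb : Cfg → Fm → Prop where
  | ax (p : ℕ) : DerLb [.fml (.var p)] (.var p)
  | ldivL (Δ : Ctx) (Pi : Cfg) (A B C : Fm) :
      DerLb Pi A → DerLb (plug Δ [.fml B]) C →
      DerLb (plug Δ (Pi ++ [.fml (.ldiv A B)])) C
  | ldivR (Pi : Cfg) (A B : Fm) :
      DerLb (.fml A :: Pi) B → DerLb Pi (.ldiv A B)
  | rdivL (Δ : Ctx) (Pi : Cfg) (A B C : Fm) :
      DerLb Pi A → DerLb (plug Δ [.fml B]) C →
      DerLb (plug Δ (.fml (.rdiv B A) :: Pi)) C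
  | rdivR (Pi : Cfg) (A B : Fm) :
      DerLb (Pi ++ [.fml A]) B → DerLb Pi (.rdiv B A)
  | mulL (Δ : Ctx) (A B C : Fm) :
      DerLb (plug Δ [.fml A, .fml B]) C → DerLb (plug Δ [.fml (.mul A B)]) C
  | mulR (Γ Δ : Cfg) (A B : Fm) :
      DerLb Γ A → DerLb Δ B → DerLb (Γ ++ Δ) (.mul A B)
  | diaL (Δ : Ctx) (A C : Fm) :
      DerLb (plug Δ [.brk [.fml A]]) C → DerLb (plug Δ [.fml (.dia A)]) C
  | diaR (Pi : Cfg) (A : Fm) :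
      DerLb Pi A → DerLb [.brk Pi] (.dia A)
  | boxL (Δ : Ctx) (A C : Fm) :
      DerLb (plug Δ [.fml A]) C → DerLb (plug Δ [.brk [.fml (.box A)]]) C
  | boxR (Pi : Cfg) (A : Fm) :
      DerLb [.brk Pi] A → DerLb Pi (.box A)

/-- Formulas of the plain Lambek calculus `L*` (no bracket modalities). -/
inductive PF where
  | var : ℕ → PF
  | mul : PF → PF → PF        -- A · B
  | ldiv : PF → PF → PF       -- A \ B
  | rdiv : PF → PF → PF       -- B / A   (rdiv B A)

/-- Derivability in `L*` (the Lambek calculus allowing empty antecedents). -/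
inductive DerL : List PF → PF → Prop where
  | ax (p : ℕ) : DerL [.var p] (.var p)
  | ldivL (Δ₁ Δ₂ Pi : List PF) (A B C : PF) :
      DerL Pi A → DerL (Δ₁ ++ [B] ++ Δ₂) C →
      DerL (Δ₁ ++ Pi ++ [.ldiv A B] ++ Δ₂) C
  | ldivR (Pi : List PF) (A B : PF) :
      DerL (A :: Pi) B → DerL Pi (.ldiv A B)
  | rdivL (Δ₁ Δ₂ Pi : List PF) (A B C : PF) :
      DerL Pi A → DerL (Δ₁ ++ [B] ++ Δ₂) C →
      DerL (Δ₁ ++ [.rdiv B A] ++ Pi ++ Δ₂) C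
  | rdivR (Pi : List PF) (A B : PF) :
      DerL (Pi ++ [A]) B → DerL Pi (.rdiv B A)
  | mulL (Δ₁ Δ₂ : List PF) (A B C : PF) :
      DerL (Δ₁ ++ [A, B] ++ Δ₂) C → DerL (Δ₁ ++ [.mul A B] ++ Δ₂) C
  | mulR (Γ Δ : List PF) (A B : PF) :
      DerL Γ A → DerL Δ B → DerL (Γ ++ Δ) (.mul A B)

/-- The fresh variable `r` (fresh since translated variables are shifted
by 2). -/
def rV : PF := .var 0
/-- The fresh variable `s`. -/
def sV : PF := .var 1

/-- The Versmissen-style translation on formulas: `tr(p_i) = p_i` (shifted to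
keep `r`, `s` fresh), `tr` commutes with `\`, `/`, `·`, `tr(⟨⟩A) = r·tr(A)·s`,
`tr([]⁻¹A) = r\tr(A)/s`. -/
def trF : Fm → PF
  | .var i => .var (i + 2)
  | .mul A B => .mul (trF A) (trF B)
  | .ldiv A B => .ldiv (trF A) (trF B)
  | .rdiv B A => .rdiv (trF B) (trF A)
  | .dia A => .mul (.mul rV (trF A)) sV
  | .box A => .ldiv rV (.rdiv (trF A) sV)

mutual
/-- Translation of an item: `tr([Γ]) = r, tr(Γ), s`. -/
def trI : Item → List PF
  | .fml A => [trF A]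
  | .brk Γ => rV :: (trC Γ ++ [sV])
/-- Translation of a configuration. -/
def trC : Cfg → List PF
  | [] => []
  | x :: xs => trI x ++ trC xs
end

/-
An `Lb*` derivation of `⟨⟩A` ends either with `⟨⟩R`, which needs an antecedent consisting of
exactly one bracket, or with a left rule. If the antecedent consists of atoms and bracketed
boxed atoms `[[]⁻¹pᵢ]`, the only applicable left rule is `[]⁻¹L`, which replaces a `[[]⁻¹pᵢ]`
by `pᵢ`; this keeps the shape of the antecedent and its length. Hence from `[[]⁻¹p], [[]⁻¹q]`,
of length two, `⟨⟩R` is never reached. In `L*` the brackets dissolve into the atoms `r`, `s`: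
after splitting off the outer `r` and `s` by `·R` and restoring them by `\R`, `/R`,
each `r\` and `/s` cancels against an adjacent atom, leaving `p, q → p·q`.
-/

inductive SimpleItem : Item → Prop
  | var (n : ℕ) : SimpleItem (.fml (.var n))
  | bracketedBox (n : ℕ) : SimpleItem (.brk [.fml (.box (.var n))])

lemma SimpleItem.eq_box_of_brk {L : Cfg} (h : SimpleItem (.brk L)) :
    ∃ n, L = [.fml (.box (.var n))] := by
  cases h with
  | bracketedBox n => exact ⟨n, rfl⟩

lemma SimpleItem.eq_var_of_fml {F : Fm} (h : SimpleItem (.fml F)) : ∃ n, F = .var n := by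
  cases h with
  | var n => exact ⟨n, rfl⟩

lemma mem_of_plug_eq_singleton {c : Ctx} {X : Cfg} {F : Fm} (h : plug c X = [.fml F])
    {e : Item} (he : e ∈ X) : e = .fml F := by
  cases c with
  | top pre post =>
    have : e ∈ plug (.top pre post) X := by simp [plug, he]
    simpa [h] using this
  | nest pre c post =>
    have : Item.brk (plug c X) ∈ plug (.nest pre c post) X := by simp [plug]
    simp [h] at this

lemma eq_box_of_mem_of_plug_nest {pre post : Cfg} {c : Ctx} {X : Cfg}
    (h : ∀ i ∈ plug (.nest pre c post) X, SimpleItem i) {e : Item} (he : e ∈ X) :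
    ∃ n, e = .fml (.box (.var n)) := by
  obtain ⟨n, hn⟩ := (h (.brk (plug c X)) (by simp [plug])).eq_box_of_brk
  exact ⟨n, mem_of_plug_eq_singleton hn he⟩

lemma eq_var_or_box_of_fml_mem {Δ : Ctx} {X : Cfg} (h : ∀ i ∈ plug Δ X, SimpleItem i)
    {F : Fm} (hF : .fml F ∈ X) : ∃ n, F = .var n ∨ F = .box (.var n) := by
  cases Δ with
  | top pre post =>
    obtain ⟨n, hn⟩ := (h (.fml F) (by simp [plug, hF])).eq_var_of_fml
    exact ⟨n, .inl hn⟩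
  | nest pre c post =>
    obtain ⟨n, hn⟩ := eq_box_of_mem_of_plug_nest h hF
    exact ⟨n, .inr (Item.fml.inj hn)⟩

theorem not_derLb_dia_of_simple {Γ : Cfg} {A : Fm} (hΓ : ∀ i ∈ Γ, SimpleItem i)
    (hlen : Γ.length ≠ 1) : ¬ DerLb Γ (.dia A) := by
  intro h
  generalize hC : Fm.dia A = C at h
  induction h with
  | ax | ldivR | rdivR | mulR | boxR => cases hC
  | diaR => simp at hlen
  | ldivL Δ Pi A B =>
    obtain ⟨n, h | h⟩ := eq_var_or_box_of_fml_mem hΓ (F := .ldiv A B) (by simp) <;> cases h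
  | rdivL Δ Pi A B =>
    obtain ⟨n, h | h⟩ := eq_var_or_box_of_fml_mem hΓ (F := .rdiv B A) (by simp) <;> cases h
  | mulL Δ A B =>
    obtain ⟨n, h | h⟩ := eq_var_or_box_of_fml_mem hΓ (F := .mul A B) (by simp) <;> cases h
  | diaL Δ A =>
    obtain ⟨n, h | h⟩ := eq_var_or_box_of_fml_mem hΓ (F := .dia A) (by simp) <;> cases h
  | boxL Δ B C _ ih =>
    cases Δ with
    | nest pre c post =>
      obtain ⟨n, hn⟩ := eq_box_of_mem_of_plug_nest hΓ (e := .brk [.fml (.box B)]) (by simp)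
      cases hn
    | top pre post =>
      obtain ⟨n, hn⟩ := (hΓ (.brk [.fml (.box B)]) (by simp [plug])).eq_box_of_brk
      obtain rfl : B = .var n := by simpa using hn
      refine ih ?_ (by simpa [plug] using hlen) hC
      intro i hi
      simp only [plug, List.mem_append, List.mem_singleton] at hi
      rcases hi with (hi | rfl) | hi
      · exact hΓ i (by simp [plug, hi])
      · exact .var n
      · exact hΓ i (by simp [plug, hi])

theorem derL_bracketed_boxes (i j : ℕ) :
    DerL [rV, .ldiv rV (.rdiv (.var i) sV), sV, rV, .ldiv rV (.rdiv (.var j) sV), sV]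
      (.mul (.mul rV (.ldiv rV (.rdiv (.mul (.var i) (.var j)) sV))) sV) := by
  set P : PF := .var i
  set Q : PF := .var j
  have hPQ : DerL [P, Q] (.mul P Q) := DerL.mulR [P] [Q] P Q (.ax _) (.ax _)
  have hs₂ : DerL [P, .rdiv Q sV, sV] (.mul P Q) :=
    DerL.rdivL [P] [] [sV] sV Q _ (.ax 1) hPQ
  have hr₂ : DerL [P, rV, .ldiv rV (.rdiv Q sV), sV] (.mul P Q) :=
    DerL.ldivL [P] [sV] [rV] rV (.rdiv Q sV) _ (.ax 0) hs₂
  have hs₁ : DerL [.rdiv P sV, sV, rV, .ldiv rV (.rdiv Q sV), sV] (.mul P Q) :=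
    DerL.rdivL [] [rV, .ldiv rV (.rdiv Q sV), sV] [sV] sV P _ (.ax 1) hr₂
  have hr₁ : DerL [rV, .ldiv rV (.rdiv P sV), sV, rV, .ldiv rV (.rdiv Q sV), sV]
      (.mul P Q) :=
    DerL.ldivL [] [sV, rV, .ldiv rV (.rdiv Q sV), sV] [rV] rV (.rdiv P sV) _ (.ax 0) hs₁
  have hbox : DerL [.ldiv rV (.rdiv P sV), sV, rV, .ldiv rV (.rdiv Q sV)]
      (.ldiv rV (.rdiv (.mul P Q) sV)) :=
    .ldivR _ _ _ (.rdivR _ _ _ hr₁)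
  exact .mulR _ [sV] _ sV (.mulR [rV] _ _ _ (.ax 0) hbox) (.ax 1)

/-- The counter-example to the converse of the Versmissen translation: the
sequent `[[]⁻¹p], [[]⁻¹q] → ⟨⟩[]⁻¹(p·q)` is not derivable in `Lb*`, while its
translation `r, r\p/s, s, r, r\q/s, s → r·(r\(p·q)/s)·s` is derivable
in `L*`. -/
theorem stmt13 (p q : ℕ) :
    ¬ DerLb [Item.brk [.fml (.box (.var p))], Item.brk [.fml (.box (.var q))]]
        (Fm.dia (.box (.mul (.var p) (.var q)))) ∧
    DerL (trC [Item.brk [.fml (.box (.var p))], Item.brk [.fml (.box (.var q))]])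
        (trF (Fm.dia (.box (.mul (.var p) (.var q))))) := by
  refine ⟨not_derLb_dia_of_simple ?_ (by simp), ?_⟩
  · simp only [List.mem_cons, List.not_mem_nil, or_false]
    rintro i (rfl | rfl)
    exacts [.bracketedBox p, .bracketedBox q]
  · simpa [trC, trI, trF] using derL_bracketed_boxes (p + 2) (q + 2)
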